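/- arXiv:1709.04912 — 3 statements merged into one kernel-verified Lean document; each statement's English description precedes it below -/
import Mathlib

section
/- Under the hypotheses of Proposition 4: let c = ‖A‖₂ > 0, x, u ∈ ℝ^J with ‖u‖ = η₀‖g‖, 0 < η₀ ≤ 1/(4c²), g = Aᵀ(Ax − y), x_half = x + u, g_half = Aᵀ(A x_half − y), and let p satisfy ⟨g_half, βp_prev⟩ ≤ c²η₀‖g‖·‖g_half‖ with p = −g_half + βp_prev, ⟨Ap, A p_prev⟩ = 0, Ap ≠ 0. Then with α = −⟨g_half, p⟩/‖Ap‖² and x' = x_half + αp, one has 2f(x_half) − 2f(x') ≥ ‖g_half‖²/(4c²) ≥ ‖g‖²/(16c²). -/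
set_option maxHeartbeats 1000000

open RealInnerProductSpace

theorem stmt7 {L J : ℕ}
    (A : EuclideanSpace ℝ (Fin J) →L[ℝ] EuclideanSpace ℝ (Fin L))
    (y : EuclideanSpace ℝ (Fin L))
    (c : ℝ) (hc : c = ‖A‖) (hcpos : 0 < c)
    (x u : EuclideanSpace ℝ (Fin J)) (η₀ : ℝ)
    (g : EuclideanSpace ℝ (Fin J)) (hg : g = ContinuousLinearMap.adjoint A (A x - y))
    (hu : ‖u‖ = η₀ * ‖g‖) (hη₀ : 0 < η₀) (hη₀' : η₀ ≤ 1 / (4 * c ^ 2))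
    (xhalf : EuclideanSpace ℝ (Fin J)) (hxhalf : xhalf = x + u)
    (ghalf : EuclideanSpace ℝ (Fin J))
    (hghalf : ghalf = ContinuousLinearMap.adjoint A (A xhalf - y))
    (p pprev : EuclideanSpace ℝ (Fin J)) (β : ℝ)
    (hp : p = -ghalf + β • pprev)
    (hcross : ⟪ghalf, β • pprev⟫ ≤ c ^ 2 * η₀ * ‖g‖ * ‖ghalf‖)
    (hconj : ⟪A p, A pprev⟫ = 0)
    (hAp : A p ≠ 0)
    (α : ℝ) (hα : α = -⟪ghalf, p⟫ / ‖A p‖ ^ 2)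
    (x' : EuclideanSpace ℝ (Fin J)) (hx' : x' = xhalf + α • p) :
    ‖g‖ ^ 2 / (16 * c ^ 2) ≤ ‖ghalf‖ ^ 2 / (4 * c ^ 2) ∧
      ‖ghalf‖ ^ 2 / (4 * c ^ 2) ≤
        2 * ((1 / 2 : ℝ) * ‖y - A xhalf‖ ^ 2) - 2 * ((1 / 2 : ℝ) * ‖y - A x'‖ ^ 2) := by
  have hcne : c ≠ 0 := ne_of_gt hcpos
  have hAnorm : ‖ContinuousLinearMap.adjoint A‖ = ‖A‖ :=
    LinearIsometryEquiv.norm_map ContinuousLinearMap.adjoint A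
  -- bound on ‖ghalf - g‖
  have hdiff : ghalf - g = (ContinuousLinearMap.adjoint A) (A u) := by
    subst hghalf hg hxhalf
    rw [← map_sub]
    congr 1
    rw [map_add]
    abel
  have hgb : ‖ghalf - g‖ ≤ c ^ 2 * η₀ * ‖g‖ := by
    rw [hdiff]
    calc ‖(ContinuousLinearMap.adjoint A) (A u)‖ ≤ ‖ContinuousLinearMap.adjoint A‖ * ‖A u‖ :=
          (ContinuousLinearMap.adjoint A).le_opNorm _
      _ ≤ ‖A‖ * (‖A‖ * ‖u‖) := by
          rw [hAnorm]
          exact mul_le_mul_of_nonneg_left (A.le_opNorm u) (norm_nonneg A)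
      _ = c ^ 2 * η₀ * ‖g‖ := by rw [← hc, hu]; ring
  have hgnn : (0:ℝ) ≤ ‖g‖ := norm_nonneg g
  have hghnn : (0:ℝ) ≤ ‖ghalf‖ := norm_nonneg ghalf
  have hc2 : c ^ 2 * η₀ ≤ 1 / 4 := by
    rw [le_div_iff₀ (by positivity : (0:ℝ) < 4 * c ^ 2)] at hη₀'
    nlinarith
  have hgb' : ‖ghalf - g‖ ≤ ‖g‖ / 4 := by nlinarith
  have hlow : 3 / 4 * ‖g‖ ≤ ‖ghalf‖ := by
    have := norm_sub_norm_le g ghalf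
    rw [norm_sub_rev] at this
    linarith
  constructor
  · rw [div_le_div_iff₀ (by positivity) (by positivity)]
    nlinarith [mul_le_mul hlow hlow (by positivity) hghnn, sq_nonneg c,
      mul_nonneg (mul_nonneg hgnn hgnn) (sq_nonneg c)]
  -- second inequality
  have ht : ⟪ghalf, p⟫ ≤ -(2/3) * ‖ghalf‖ ^ 2 := by
    have : ⟪ghalf, p⟫ = -‖ghalf‖ ^ 2 + ⟪ghalf, β • pprev⟫ := by
      rw [hp, inner_add_right, inner_neg_right, real_inner_self_eq_norm_sq]
    have hcr : c ^ 2 * η₀ * ‖g‖ * ‖ghalf‖ ≤ 1/3 * ‖ghalf‖ ^ 2 := by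
      have h1 : c ^ 2 * η₀ * (‖g‖ * ‖ghalf‖) ≤ 1/4 * (‖g‖ * ‖ghalf‖) :=
        mul_le_mul_of_nonneg_right hc2 (mul_nonneg hgnn hghnn)
      have h2 : ‖g‖ * ‖ghalf‖ ≤ (4/3 * ‖ghalf‖) * ‖ghalf‖ :=
        mul_le_mul_of_nonneg_right (by linarith) hghnn
      nlinarith
    linarith [hcross]
  have hspos : (0:ℝ) < ‖A p‖ ^ 2 := pow_pos (norm_pos_iff.mpr hAp) 2
  have hs : ‖A p‖ ^ 2 ≤ c ^ 2 * ‖ghalf‖ ^ 2 := by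
    have h1 : ‖A p‖ ^ 2 = -⟪A p, A ghalf⟫ := by
      have : ‖A p‖ ^ 2 = ⟪A p, A p⟫ := (real_inner_self_eq_norm_sq _).symm
      rw [this]
      nth_rewrite 2 [hp]
      rw [map_add, map_neg, map_smul, inner_add_right, inner_neg_right,
        inner_smul_right, hconj]
      ring
    have h2 : -⟪A p, A ghalf⟫ ≤ ‖A p‖ * (c * ‖ghalf‖) := by
      calc -⟪A p, A ghalf⟫ ≤ ‖A p‖ * ‖A ghalf‖ := by
            have := abs_real_inner_le_norm (A p) (A ghalf)
            have := neg_abs_le (⟪A p, A ghalf⟫)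
            linarith
        _ ≤ ‖A p‖ * (c * ‖ghalf‖) := by
            have := A.le_opNorm ghalf
            rw [← hc] at this
            exact mul_le_mul_of_nonneg_left this (norm_nonneg _)
    have hApn : (0:ℝ) < ‖A p‖ := norm_pos_iff.mpr hAp
    have hAle : ‖A p‖ ≤ c * ‖ghalf‖ := by
      have := h1 ▸ h2
      nlinarith
    nlinarith
  -- decrease identity
  have hinner : ⟪y - A xhalf, A p⟫ = -⟪ghalf, p⟫ := by
    rw [hghalf, ContinuousLinearMap.adjoint_inner_left, ← inner_neg_left]
    congr 1
    abel
  have hdec : 2 * ((1 / 2 : ℝ) * ‖y - A xhalf‖ ^ 2) - 2 * ((1 / 2 : ℝ) * ‖y - A x'‖ ^ 2)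
      = ⟪ghalf, p⟫ ^ 2 / ‖A p‖ ^ 2 := by
    have hyx : y - A x' = (y - A xhalf) - α • (A p) := by
      rw [hx', map_add, map_smul]; abel
    have key : ‖y - A x'‖ ^ 2 = ‖y - A xhalf‖ ^ 2 + 2 * α * ⟪ghalf, p⟫ + α ^ 2 * ‖A p‖ ^ 2 := by
      rw [hyx, norm_sub_sq_real, inner_smul_right, hinner, norm_smul, mul_pow, Real.norm_eq_abs, sq_abs]
      ring
    rw [key, hα]
    have hApne : ‖A p‖ ^ 2 ≠ 0 := ne_of_gt hspos
    field_simp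
    ring
  rw [hdec]
  set t := ⟪ghalf, p⟫
  rw [div_le_div_iff₀ (by positivity) hspos]
  have ht2 : (2/3 * ‖ghalf‖ ^ 2) ^ 2 ≤ t ^ 2 := by nlinarith
  nlinarith [hs, mul_le_mul_of_nonneg_left hs (sq_nonneg ‖ghalf‖), sq_nonneg c, sq_nonneg ‖ghalf‖]
end

section
/- Let f(x) = (1/2)‖y − Ax‖², ε₀ = min_x f(x), and ε > ε₀. Then θ := inf{‖Aᵀ(Ax − y)‖ : f(x) > ε} > 0. -/
open RealInnerProductSpace

set_option maxHeartbeats 1000000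

/-- Auxiliary: the adjoint is uniformly bounded below on the range of `A`. -/
lemma stmt12_aux {L J : ℕ}
    (A : EuclideanSpace ℝ (Fin J) →L[ℝ] EuclideanSpace ℝ (Fin L)) :
    ∃ c : ℝ, 0 < c ∧ ∀ u : EuclideanSpace ℝ (Fin J),
      c * ‖A u‖ ≤ ‖ContinuousLinearMap.adjoint A (A u)‖ := by
  set S : Submodule ℝ (EuclideanSpace ℝ (Fin L)) :=
    LinearMap.range (A : EuclideanSpace ℝ (Fin J) →ₗ[ℝ] EuclideanSpace ℝ (Fin L)) with hS
  set B : S →ₗ[ℝ] EuclideanSpace ℝ (Fin J) :=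
    ((ContinuousLinearMap.adjoint A : EuclideanSpace ℝ (Fin L) →L[ℝ]
      EuclideanSpace ℝ (Fin J)) : EuclideanSpace ℝ (Fin L) →ₗ[ℝ]
      EuclideanSpace ℝ (Fin J)).comp S.subtype with hB
  have hker : LinearMap.ker B = ⊥ := by
    rw [LinearMap.ker_eq_bot']
    rintro ⟨w, hw⟩ hm
    obtain ⟨u, hu⟩ := hw
    have hu' : A u = w := hu
    have hBw : ContinuousLinearMap.adjoint A w = 0 := hm
    have hww : ⟪w, w⟫ = (0:ℝ) := by
      calc ⟪w, w⟫ = ⟪A u, w⟫ := by rw [hu']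
        _ = ⟪u, ContinuousLinearMap.adjoint A w⟫ := by
            rw [ContinuousLinearMap.adjoint_inner_right]
        _ = 0 := by rw [hBw]; simp
    exact Subtype.ext (inner_self_eq_zero.mp hww)
  obtain ⟨K, hKpos, hanti⟩ := B.exists_antilipschitzWith hker
  have hKR : (0:ℝ) < (K:ℝ) := hKpos
  refine ⟨(K : ℝ)⁻¹, by positivity, ?_⟩
  intro u
  have hwS : A u ∈ S := ⟨u, rfl⟩
  have hlip : ‖A u‖ ≤ (K : ℝ) * ‖ContinuousLinearMap.adjoint A (A u)‖ := by
    have h0 := hanti.le_mul_dist (⟨A u, hwS⟩ : S) 0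
    simp only [dist_zero_right, map_zero] at h0
    have hn : ‖(⟨A u, hwS⟩ : S)‖ = ‖A u‖ := rfl
    have hb : B ⟨A u, hwS⟩ = ContinuousLinearMap.adjoint A (A u) := rfl
    rw [hn, hb] at h0
    exact h0
  rw [inv_mul_le_iff₀ hKR]
  exact hlip

theorem stmt12 {L J : ℕ}
    (A : EuclideanSpace ℝ (Fin J) →L[ℝ] EuclideanSpace ℝ (Fin L))
    (y : EuclideanSpace ℝ (Fin L))
    (f : EuclideanSpace ℝ (Fin J) → ℝ)
    (hf : ∀ x, f x = (1 / 2 : ℝ) * ‖y - A x‖ ^ 2)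
    (xLS : EuclideanSpace ℝ (Fin J)) (hmin : ∀ x, f xLS ≤ f x)
    (ε : ℝ) (hε : f xLS < ε) :
    ∃ θ : ℝ, 0 < θ ∧ ∀ x : EuclideanSpace ℝ (Fin J),
      ε < f x → θ ≤ ‖ContinuousLinearMap.adjoint A (A x - y)‖ := by
  set r : EuclideanSpace ℝ (Fin L) := A xLS - y with hr
  -- Step 1: orthogonality of residual to range of A
  have horth : ∀ v : EuclideanSpace ℝ (Fin J), ⟪r, A v⟫ = 0 := by
    intro v
    by_cases hAv : A v = 0
    · simp [hAv]
    · have hAvpos : (0:ℝ) < ‖A v‖ ^ 2 := by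
        have := norm_pos_iff.mpr hAv
        positivity
      set c := ⟪r, A v⟫ with hc
      have key : ∀ t : ℝ, 0 ≤ t * c + t ^ 2 / 2 * ‖A v‖ ^ 2 := by
        intro t
        have h1 := hmin (xLS + t • v)
        rw [hf, hf] at h1
        have h2 : y - A (xLS + t • v) = -(r + t • A v) := by
          simp only [map_add, map_smul, hr]
          abel
        rw [h2, norm_neg, norm_add_sq_real] at h1
        have h3 : ‖y - A xLS‖ = ‖r‖ := by rw [hr, norm_sub_rev]
        rw [h3, inner_smul_right, norm_smul] at h1
        have h4 : (‖t‖ * ‖A v‖) ^ 2 = t ^ 2 * ‖A v‖ ^ 2 := by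
          simp [Real.norm_eq_abs, mul_pow, sq_abs]
        rw [h4] at h1
        nlinarith [h1]
      have hb := key (-c / ‖A v‖ ^ 2)
      have h5 : (-c / ‖A v‖ ^ 2) * c + (-c / ‖A v‖ ^ 2) ^ 2 / 2 * ‖A v‖ ^ 2
          = -(c ^ 2) / (2 * ‖A v‖ ^ 2) := by
        field_simp
        ring
      rw [h5] at hb
      have h6 : 0 ≤ -(c ^ 2) := by
        rcases div_nonneg_iff.mp hb with ⟨h, _⟩ | ⟨_, h⟩
        · exact h
        · nlinarith
      nlinarith [sq_nonneg c]
  -- Step 2: adjoint kills the residual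
  have hadj_r : ContinuousLinearMap.adjoint A r = 0 := by
    have : ⟪ContinuousLinearMap.adjoint A r, ContinuousLinearMap.adjoint A r⟫ = (0:ℝ) := by
      rw [ContinuousLinearMap.adjoint_inner_left]
      exact horth _
    exact inner_self_eq_zero.mp this
  -- Step 3: decomposition of f
  have hdec : ∀ x, f x = f xLS + (1/2 : ℝ) * ‖A (x - xLS)‖ ^ 2 := by
    intro x
    have h2 : y - A x = -(r + A (x - xLS)) := by
      simp only [map_sub, hr]
      abel
    have h3 : ‖y - A xLS‖ = ‖r‖ := by rw [hr, norm_sub_rev]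
    rw [hf x, hf xLS, h2, norm_neg, norm_add_sq_real, horth, h3]
    ring
  -- Step 4: rewrite the gradient
  have hgrad : ∀ x, ContinuousLinearMap.adjoint A (A x - y)
      = ContinuousLinearMap.adjoint A (A (x - xLS)) := by
    intro x
    have h2 : A x - y = A (x - xLS) + r := by
      simp only [map_sub, hr]; abel
    rw [h2, map_add, hadj_r, add_zero]
  obtain ⟨K, hKpos, hK⟩ := stmt12_aux A
  refine ⟨K * Real.sqrt (2 * (ε - f xLS)), ?_, ?_⟩
  · have h2 : (0:ℝ) < Real.sqrt (2 * (ε - f xLS)) :=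
      Real.sqrt_pos.mpr (by linarith)
    positivity
  · intro x hx
    have hnormw : Real.sqrt (2 * (ε - f xLS)) ≤ ‖A (x - xLS)‖ := by
      have h1 : 2 * (ε - f xLS) ≤ ‖A (x - xLS)‖ ^ 2 := by
        have := hdec x
        nlinarith [this, hx]
      calc Real.sqrt (2 * (ε - f xLS)) ≤ Real.sqrt (‖A (x - xLS)‖ ^ 2) :=
            Real.sqrt_le_sqrt h1
        _ = ‖A (x - xLS)‖ := Real.sqrt_sq (norm_nonneg _)
    rw [hgrad x]
    calc K * Real.sqrt (2 * (ε - f xLS))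
        ≤ K * ‖A (x - xLS)‖ := by
          exact mul_le_mul_of_nonneg_left hnormw (le_of_lt hKpos)
      _ ≤ ‖ContinuousLinearMap.adjoint A (A (x - xLS))‖ := hK _
end

section
/- Let A be an L×J real matrix, y ∈ ℝ^L, f(x) = (1/2)‖y−Ax‖², ε₀ = min f, and ε > ε₀. Suppose the superiorized CG iteration (Algorithm S-CG) is run with perturbations (u_k) satisfying Σ‖u_k‖ < ∞, and at each iterate the per-step decrease 2f(x_k) − 2f(x_{k+1}) ≥ (1/(32c²))‖g_k‖² holds whenever ‖u_k‖ ≤ η_l‖g_k‖ (η_l = min{1/(4c²), η₂}, c = ‖A‖₂, g_k = Aᵀ(Ax_k − y)). Then there exists k with f(x_k) ≤ ε; i.e., the algorithm terminates. -/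
/-!
Since `x_LS` minimizes `‖y - A x‖`, the residual `y - A x_LS` is orthogonal to the range of `A`,
so `g(x) = Aᵀ A (x - x_LS)` and `2 f(x) = 2 f(x_LS) + ‖A (x - x_LS)‖²`. The adjoint is injective
on the (finite-dimensional) range of `A`, hence bounded below there; thus `f(x) > ε` forces
`‖g(x)‖ ≥ θ` for a fixed `θ > 0`. Once `‖u_k‖ ≤ η_l θ`, which holds eventually because the
perturbations are summable, every step lowers `2 f` by at least `θ² / (32 c²)`, which cannot go
on forever while `f(x_k) > ε`.
-/

open RealInnerProductSpace Filter

section LeastSquares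

variable {E F : Type*} [NormedAddCommGroup E] [InnerProductSpace ℝ E] [CompleteSpace E]
  [NormedAddCommGroup F] [InnerProductSpace ℝ F] [CompleteSpace F]

open ContinuousLinearMap InnerProduct

theorem ContinuousLinearMap.adjoint_sub_apply_eq_zero_of_forall_norm_sub_le {A : E →L[ℝ] F}
    {y : F} {x₀ : E} (hmin : ∀ x, ‖y - A x₀‖ ≤ ‖y - A x‖) : (A†) (y - A x₀) = 0 := by
  have hx₀ : A x₀ ∈ A.range := ⟨x₀, rfl⟩
  have hperp : y - A x₀ ∈ A.rangeᗮ := by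
    rw [Submodule.mem_orthogonal']
    refine (Submodule.norm_eq_iInf_iff_real_inner_eq_zero _ hx₀).1 (le_antisymm ?_ ?_)
    · exact le_ciInf fun ⟨_, z, hz⟩ => hz ▸ hmin z
    · exact ciInf_le ⟨0, by rintro _ ⟨_, rfl⟩; positivity⟩ (⟨A x₀, hx₀⟩ : (A.range : Set F))
  rwa [orthogonal_range] at hperp

theorem ContinuousLinearMap.norm_sub_sq_eq_of_adjoint_sub_apply_eq_zero {A : E →L[ℝ] F}
    {y : F} {x₀ : E} (h : (A†) (y - A x₀) = 0) (x : E) :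
    ‖y - A x‖ ^ 2 = ‖y - A x₀‖ ^ 2 + ‖A (x - x₀)‖ ^ 2 := by
  have hdecomp : y - A x = (y - A x₀) - A (x - x₀) := by rw [map_sub]; abel
  have horth : ⟪y - A x₀, A (x - x₀)⟫ = 0 := by rw [← adjoint_inner_left, h, inner_zero_left]
  rw [hdecomp, norm_sub_sq_real, horth]
  ring

theorem ContinuousLinearMap.exists_pos_mul_norm_le_norm_adjoint_apply [FiniteDimensional ℝ F]
    (A : E →L[ℝ] F) : ∃ θ > 0, ∀ v, θ * ‖A v‖ ≤ ‖(A†) (A v)‖ := by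
  set T := (A† : F →ₗ[ℝ] E).domRestrict A.range
  have hT : LinearMap.ker T = ⊥ := by
    rw [LinearMap.ker_eq_bot']
    rintro ⟨w, hw⟩ hTw
    have hw' : w ∈ A.rangeᗮ := by rw [orthogonal_range]; exact hTw
    exact Subtype.ext (Submodule.disjoint_def.1 A.range.orthogonal_disjoint w hw hw')
  obtain ⟨K, -, hK⟩ := T.exists_antilipschitzWith hT
  obtain ⟨θ, hθ, h⟩ := antilipschitzWith_iff_exists_mul_le_norm.1 ⟨K, hK⟩
  exact ⟨θ, hθ, fun v => h ⟨A v, v, rfl⟩⟩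

theorem ContinuousLinearMap.exists_pos_le_norm_adjoint_residual [FiniteDimensional ℝ F]
    (A : E →L[ℝ] F) (y : F) {x₀ : E} (hmin : ∀ x, ‖y - A x₀‖ ≤ ‖y - A x‖) {ε : ℝ}
    (hε : ‖y - A x₀‖ ^ 2 < ε) : ∃ θ > 0, ∀ x, ε ≤ ‖y - A x‖ ^ 2 → θ ≤ ‖(A†) (A x - y)‖ := by
  have hgrad := adjoint_sub_apply_eq_zero_of_forall_norm_sub_le hmin
  obtain ⟨θ, hθ, hbound⟩ := A.exists_pos_mul_norm_le_norm_adjoint_apply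
  set ρ := √(ε - ‖y - A x₀‖ ^ 2)
  refine ⟨θ * ρ, mul_pos hθ (Real.sqrt_pos.2 (sub_pos.2 hε)), fun x hx => ?_⟩
  have hρ : ρ ≤ ‖A (x - x₀)‖ := by
    rw [Real.sqrt_le_left (norm_nonneg _)]
    linarith [norm_sub_sq_eq_of_adjoint_sub_apply_eq_zero hgrad x]
  have hres : (A†) (A x - y) = (A†) (A (x - x₀)) := by
    rw [show A x - y = A (x - x₀) - (y - A x₀) by rw [map_sub]; abel, map_sub, hgrad, sub_zero]
  calc θ * ρ ≤ θ * ‖A (x - x₀)‖ := by gcongr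
    _ ≤ ‖(A†) (A x - y)‖ := hres ▸ hbound _

end LeastSquares

theorem exists_le_of_eventually_add_le {a : ℕ → ℝ} {δ : ℝ} (hδ : 0 < δ)
    (h : ∀ᶠ k in atTop, a (k + 1) + δ ≤ a k) (b : ℝ) : ∃ k, a k ≤ b := by
  obtain ⟨K, hK⟩ := eventually_atTop.1 h
  have hdesc : ∀ n : ℕ, a (K + n) ≤ a K - n * δ := by
    intro n
    induction n with
    | zero => simp
    | succ n ih => rw [← add_assoc]; push_cast; linarith [hK (K + n) (Nat.le_add_right K n)]
  obtain ⟨n, hn⟩ := exists_nat_gt ((a K - b) / δ)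
  refine ⟨K + n, (hdesc n).trans ?_⟩
  linarith [(div_lt_iff₀ hδ).1 hn]

theorem stmt14_general {L J : ℕ}
    (A : EuclideanSpace ℝ (Fin J) →L[ℝ] EuclideanSpace ℝ (Fin L))
    (y : EuclideanSpace ℝ (Fin L))
    (f : EuclideanSpace ℝ (Fin J) → ℝ)
    (hf : ∀ x, f x = (1 / 2 : ℝ) * ‖y - A x‖ ^ 2)
    (c : ℝ) (hcpos : 0 < c)
    (η₂ : ℝ) (hη₂ : 0 < η₂ ∧ (2 + c ^ 2 * η₂) * η₂ = 1 / (32 * c ^ 2))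
    (ηl : ℝ) (hηl : ηl = min (1 / (4 * c ^ 2)) η₂)
    (xLS : EuclideanSpace ℝ (Fin J)) (hmin : ∀ x, f xLS ≤ f x)
    (ε : ℝ) (hε : f xLS < ε)
    (x u : ℕ → EuclideanSpace ℝ (Fin J))
    (g : ℕ → EuclideanSpace ℝ (Fin J))
    (hg : ∀ k, g k = ContinuousLinearMap.adjoint A (A (x k) - y))
    (hsum : Summable fun k => ‖u k‖)
    (hdec : ∀ k, ‖u k‖ ≤ ηl * ‖g k‖ →
      (1 / (32 * c ^ 2)) * ‖g k‖ ^ 2 ≤ 2 * f (x k) - 2 * f (x (k + 1))) :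
    ∃ k, f (x k) ≤ ε := by
  by_contra! hfar
  have hres_min : ∀ z, ‖y - A xLS‖ ≤ ‖y - A z‖ := fun z =>
    (pow_le_pow_iff_left₀ (norm_nonneg _) (norm_nonneg _) two_ne_zero).1
      (by linarith [hmin z, hf z, hf xLS])
  obtain ⟨θ, hθ, hθg⟩ := A.exists_pos_le_norm_adjoint_residual y hres_min (ε := 2 * ε)
    (by linarith [hf xLS])
  have hgθ : ∀ k, θ ≤ ‖g k‖ := fun k => hg k ▸ hθg _ (by linarith [hfar k, hf (x k)])
  have hηl_pos : 0 < ηl := hηl ▸ lt_min (by positivity) hη₂.1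
  have hsmall : ∀ᶠ k in atTop, ‖u k‖ ≤ ηl * θ :=
    hsum.tendsto_atTop_zero.eventually_le_const (by positivity)
  have hdescent : ∀ᶠ k in atTop, 2 * f (x (k + 1)) + 1 / (32 * c ^ 2) * θ ^ 2 ≤ 2 * f (x k) := by
    filter_upwards [hsmall] with k hk
    have hgk := hgθ k
    have hstep := hdec k (hk.trans (by gcongr))
    have : 1 / (32 * c ^ 2) * θ ^ 2 ≤ 1 / (32 * c ^ 2) * ‖g k‖ ^ 2 := by gcongr
    linarith
  obtain ⟨k, hk⟩ := exists_le_of_eventually_add_le (a := fun k => 2 * f (x k))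
    (by positivity) hdescent (2 * ε)
  linarith [hfar k]

theorem stmt14 {L J : ℕ}
    (A : EuclideanSpace ℝ (Fin J) →L[ℝ] EuclideanSpace ℝ (Fin L))
    (y : EuclideanSpace ℝ (Fin L))
    (f : EuclideanSpace ℝ (Fin J) → ℝ)
    (hf : ∀ x, f x = (1 / 2 : ℝ) * ‖y - A x‖ ^ 2)
    (c : ℝ) (hc : c = ‖A‖) (hcpos : 0 < c)
    (η₂ : ℝ) (hη₂ : 0 < η₂ ∧ (2 + c ^ 2 * η₂) * η₂ = 1 / (32 * c ^ 2))
    (ηl : ℝ) (hηl : ηl = min (1 / (4 * c ^ 2)) η₂)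
    (xLS : EuclideanSpace ℝ (Fin J)) (hmin : ∀ x, f xLS ≤ f x)
    (ε : ℝ) (hε : f xLS < ε)
    (x u : ℕ → EuclideanSpace ℝ (Fin J))
    (g : ℕ → EuclideanSpace ℝ (Fin J))
    (hg : ∀ k, g k = ContinuousLinearMap.adjoint A (A (x k) - y))
    (hsum : Summable fun k => ‖u k‖)
    (hdec : ∀ k, ‖u k‖ ≤ ηl * ‖g k‖ →
      (1 / (32 * c ^ 2)) * ‖g k‖ ^ 2 ≤ 2 * f (x k) - 2 * f (x (k + 1))) :
    ∃ k, f (x k) ≤ ε :=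
  stmt14_general A y f hf c hcpos η₂ hη₂ ηl hηl xLS hmin ε hε x u g hg hsum hdec
end
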